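/- arXiv:2306.04454 — 2 statements merged into one kernel-verified Lean document; each statement's English description precedes it below -/
import Mathlib

section
/- Let n ≥ 1, let Θ_X be an n×n real symmetric positive definite matrix with least eigenvalue λ_min > 0, let K_X be an n×n real symmetric matrix, let θ, κ ∈ ℝⁿ and Θ_x, K_x ∈ ℝ. Let α ∈ ℝ, B ≥ 0, γ ≥ 0. Assume |θ_i| ≤ B for every i, |K_x − α·Θ_x| ≤ γ, |κ_i − α·θ_i| ≤ γ for every i, and the operator norm of K_X − α·Θ_X is at most n·γ. Then |σ²_NN − α·σ²_NTKGP| ≤ γ + n²γB²/λ_min² + 2nγB/λ_min = γ·(1 + nB/λ_min)². -/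
/-!
`σ²_NN` is linear in the initialization data `(K_X, κ, K_x)` and equals `σ²_NTKGP` when that
data is `(Θ_X, θ, Θ_x)`. Hence `σ²_NN − α σ²_NTKGP` is `σ²_NN` evaluated on the residual data
`(K_X − α Θ_X, κ − α θ, K_x − α Θ_x)`, and each of its terms is bounded by Cauchy–Schwarz and
operator norms, using `‖θ‖ ≤ √n B`, `‖κ − α θ‖ ≤ √n γ` and `‖Θ_X⁻¹‖ ≤ λ_min⁻¹`; the last bound
is the Rayleigh inequality `λ_min ‖w‖² ≤ ⟪w, Θ_X w⟫`.
-/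

open Matrix WithLp

section

variable {ι : Type*} [Fintype ι]

theorem EuclideanSpace.norm_toLp_le_sqrt_card_mul {v : ι → ℝ} {C : ℝ} (hC : 0 ≤ C)
    (hv : ∀ i, |v i| ≤ C) : ‖toLp 2 v‖ ≤ √(Fintype.card ι) * C := by
  rw [EuclideanSpace.norm_eq, ← Real.sqrt_sq hC, ← Real.sqrt_mul (Nat.cast_nonneg _)]
  gcongr
  calc ∑ i, ‖v i‖ ^ 2 ≤ ∑ _i : ι, C ^ 2 := by
        gcongr with i
        exact Real.norm_eq_abs _ ▸ hv i
    _ = _ := by simp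

variable [DecidableEq ι]

theorem Matrix.abs_dotProduct_mulVec_le (A : Matrix ι ι ℝ) (u v : ι → ℝ) :
    |u ⬝ᵥ A *ᵥ v| ≤ ‖toLp 2 u‖ * ‖toEuclideanCLM (𝕜 := ℝ) A‖ * ‖toLp 2 v‖ := by
  rw [← inner_toEuclideanCLM, mul_assoc]
  exact (abs_real_inner_le_norm _ _).trans
    (mul_le_mul_of_nonneg_left (ContinuousLinearMap.le_opNorm _ _) (norm_nonneg _))

open scoped MatrixOrder in
theorem Matrix.IsHermitian.mul_dotProduct_self_le_dotProduct_mulVec {A : Matrix ι ι ℝ}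
    (hA : A.IsHermitian) {c : ℝ} (hc : ∀ i, c ≤ hA.eigenvalues i) (w : ι → ℝ) :
    c * (w ⬝ᵥ w) ≤ w ⬝ᵥ A *ᵥ w := by
  have hcA : algebraMap ℝ _ c ≤ A := by
    rw [algebraMap_le_iff_le_spectrum hA.isSelfAdjoint, hA.spectrum_real_eq_range_eigenvalues]
    rintro _ ⟨i, rfl⟩
    exact hc i
  have := (le_iff.mp hcA).dotProduct_mulVec_nonneg w
  simp only [star_trivial, Algebra.algebraMap_eq_smul_one, sub_mulVec,
    smul_mulVec, one_mulVec, dotProduct_sub, dotProduct_smul, smul_eq_mul] at this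
  linarith

theorem Matrix.PosDef.norm_toEuclideanCLM_inv_le {A : Matrix ι ι ℝ} (hA : A.PosDef) {c : ℝ}
    (hc : 0 < c) (hle : ∀ i, c ≤ hA.isHermitian.eigenvalues i) :
    ‖toEuclideanCLM (𝕜 := ℝ) A⁻¹‖ ≤ c⁻¹ := by
  refine ContinuousLinearMap.opNorm_le_bound _ (inv_nonneg.2 hc.le) fun x ↦ ?_
  set w := toEuclideanCLM (𝕜 := ℝ) A⁻¹ x with hw
  have hAw : toEuclideanCLM (𝕜 := ℝ) A w = x := by
    rw [hw, ← mul_apply_eq_comp, ← map_mul, mul_nonsing_inv _ hA.det_pos.ne'.isUnit,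
      map_one, one_apply_eq_self]
  have hrayleigh : c * ‖w‖ ^ 2 ≤ ‖w‖ * ‖x‖ := by
    have hnorm : ofLp w ⬝ᵥ ofLp w = ‖w‖ ^ 2 := by
      rw [← real_inner_self_eq_norm_sq, EuclideanSpace.inner_eq_star_dotProduct, star_trivial]
    have := hA.isHermitian.mul_dotProduct_self_le_dotProduct_mulVec hle (ofLp w)
    rw [hnorm, ← inner_toEuclideanCLM, hAw] at this
    exact this.trans (real_inner_le_norm _ _)
  rw [le_inv_mul_iff₀ hc]
  rcases (norm_nonneg w).eq_or_lt with hw0 | hw0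
  · rw [← hw0, mul_zero]
    exact norm_nonneg x
  · nlinarith

noncomputable def ntkgpVariance (ΘX : Matrix ι ι ℝ) (θ : ι → ℝ) (Θx : ℝ) : ℝ :=
  Θx - θ ⬝ᵥ (ΘX⁻¹ *ᵥ θ)

noncomputable def nnVariance (ΘX KX : Matrix ι ι ℝ) (θ κ : ι → ℝ) (Kx : ℝ) : ℝ :=
  Kx + θ ⬝ᵥ (ΘX⁻¹ *ᵥ (KX *ᵥ (ΘX⁻¹ *ᵥ θ))) - κ ⬝ᵥ (ΘX⁻¹ *ᵥ θ) - θ ⬝ᵥ (ΘX⁻¹ *ᵥ κ)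

theorem nnVariance_sub_mul_ntkgpVariance {ΘX : Matrix ι ι ℝ} (hΘX : IsUnit ΘX.det)
    (KX : Matrix ι ι ℝ) (θ κ : ι → ℝ) (Θx Kx α : ℝ) :
    nnVariance ΘX KX θ κ Kx - α * ntkgpVariance ΘX θ Θx =
      nnVariance ΘX (KX - α • ΘX) θ (κ - α • θ) (Kx - α * Θx) := by
  have hθ : ΘX *ᵥ (ΘX⁻¹ *ᵥ θ) = θ := by
    rw [mulVec_mulVec, mul_nonsing_inv _ hΘX, one_mulVec]
  simp only [nnVariance, ntkgpVariance, sub_mulVec, smul_mulVec, mulVec_sub,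
    mulVec_smul, hθ, dotProduct_sub, sub_dotProduct, dotProduct_smul, smul_dotProduct,
    smul_eq_mul]
  ring

theorem abs_nnVariance_le (ΘX KX : Matrix ι ι ℝ) (θ κ : ι → ℝ) (Kx : ℝ) :
    |nnVariance ΘX KX θ κ Kx| ≤
      |Kx| + ‖toLp 2 θ‖ ^ 2 * ‖toEuclideanCLM (𝕜 := ℝ) ΘX⁻¹‖ ^ 2 * ‖toEuclideanCLM (𝕜 := ℝ) KX‖
        + 2 * ‖toLp 2 θ‖ * ‖toLp 2 κ‖ * ‖toEuclideanCLM (𝕜 := ℝ) ΘX⁻¹‖ := by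
  set T := toEuclideanCLM (n := ι) (𝕜 := ℝ)
  have hquad : |θ ⬝ᵥ ΘX⁻¹ *ᵥ KX *ᵥ ΘX⁻¹ *ᵥ θ| ≤
      ‖toLp 2 θ‖ * (‖T ΘX⁻¹‖ * ‖T KX‖ * ‖T ΘX⁻¹‖) * ‖toLp 2 θ‖ := by
    rw [mulVec_mulVec, mulVec_mulVec]
    refine (abs_dotProduct_mulVec_le _ _ _).trans ?_
    gcongr
    rw [map_mul, map_mul]
    exact (norm_mul_le _ _).trans (by gcongr; exact norm_mul_le _ _)
  have hcross₁ := abs_dotProduct_mulVec_le ΘX⁻¹ κ θ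
  have hcross₂ := abs_dotProduct_mulVec_le ΘX⁻¹ θ κ
  unfold nnVariance
  calc _ ≤ |Kx| + |θ ⬝ᵥ ΘX⁻¹ *ᵥ KX *ᵥ ΘX⁻¹ *ᵥ θ| + |κ ⬝ᵥ ΘX⁻¹ *ᵥ θ| + |θ ⬝ᵥ ΘX⁻¹ *ᵥ κ| :=
        (abs_sub _ _).trans
          (by gcongr; exact (abs_sub _ _).trans (by gcongr; exact abs_add_le _ _))
    _ ≤ _ := by linarith

end

theorem sigmaNN_sub_alpha_sigmaNTKGP_bound_general
    (n : ℕ)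
    (ΘX KX : Matrix (Fin n) (Fin n) ℝ)
    (hΘsym : ΘX.IsHermitian) (hΘpd : ΘX.PosDef)
    (lammin : ℝ) (hlam : lammin = ⨅ i, hΘsym.eigenvalues i) (hlampos : 0 < lammin)
    (θ κ : Fin n → ℝ) (Θx Kx α B γ : ℝ) (hB : 0 ≤ B) (hγ : 0 ≤ γ)
    (hθB : ∀ i, |θ i| ≤ B)
    (hKxΘx : |Kx - α * Θx| ≤ γ)
    (hκθ : ∀ i, |κ i - α * θ i| ≤ γ)
    (hop : ‖Matrix.toEuclideanCLM (𝕜 := ℝ) (KX - α • ΘX)‖ ≤ n * γ) :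
    |(Kx + θ ⬝ᵥ (ΘX⁻¹ *ᵥ (KX *ᵥ (ΘX⁻¹ *ᵥ θ))) - κ ⬝ᵥ (ΘX⁻¹ *ᵥ θ)
        - θ ⬝ᵥ (ΘX⁻¹ *ᵥ κ))
      - α * (Θx - θ ⬝ᵥ (ΘX⁻¹ *ᵥ θ))| ≤
      γ + n ^ 2 * γ * B ^ 2 / lammin ^ 2 + 2 * n * γ * B / lammin ∧
    γ + n ^ 2 * γ * B ^ 2 / lammin ^ 2 + 2 * n * γ * B / lammin =
      γ * (1 + n * B / lammin) ^ 2 := by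
  have hinv : ‖toEuclideanCLM (𝕜 := ℝ) ΘX⁻¹‖ ≤ lammin⁻¹ :=
    hΘpd.norm_toEuclideanCLM_inv_le hlampos fun i ↦ hlam ▸ ciInf_le (Finite.bddBelow_range _) i
  have hθ : ‖toLp 2 θ‖ ≤ √n * B := by
    simpa only [Fintype.card_fin] using EuclideanSpace.norm_toLp_le_sqrt_card_mul hB hθB
  have hδ : ‖toLp 2 (κ - α • θ)‖ ≤ √n * γ := by
    simpa only [Fintype.card_fin] using
      EuclideanSpace.norm_toLp_le_sqrt_card_mul (v := κ - α • θ) hγ hκθ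
  have hsqrt : √n ^ 2 = n := Real.sq_sqrt n.cast_nonneg
  refine ⟨?_, by field_simp; ring⟩
  calc _ = |nnVariance ΘX (KX - α • ΘX) θ (κ - α • θ) (Kx - α * Θx)| := by
        rw [← nnVariance_sub_mul_ntkgpVariance hΘpd.det_pos.ne'.isUnit]; rfl
    _ ≤ γ + (√n * B) ^ 2 * lammin⁻¹ ^ 2 * (n * γ) + 2 * (√n * B) * (√n * γ) * lammin⁻¹ :=
        (abs_nnVariance_le _ _ _ _ _).trans (by gcongr)
    _ = _ := by field_simp; rw [hsqrt]; ring

/-- Formal version of Theorem 3.1: with `σ²_NTKGP = Θ_x − θᵀΘ_X⁻¹θ` and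
`σ²_NN = K_x + θᵀΘ_X⁻¹K_XΘ_X⁻¹θ − κᵀΘ_X⁻¹θ − θᵀΘ_X⁻¹κ`, under the stated
bounds, `|σ²_NN − α·σ²_NTKGP| ≤ γ + n²γB²/λ_min² + 2nγB/λ_min
 = γ·(1 + nB/λ_min)²`. -/
theorem sigmaNN_sub_alpha_sigmaNTKGP_bound
    (n : ℕ) (hn : 1 ≤ n)
    (ΘX KX : Matrix (Fin n) (Fin n) ℝ)
    (hΘsym : ΘX.IsHermitian) (hΘpd : ΘX.PosDef) (hKsym : KX.IsHermitian)
    (lammin : ℝ) (hlam : lammin = ⨅ i, hΘsym.eigenvalues i) (hlampos : 0 < lammin)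
    (θ κ : Fin n → ℝ) (Θx Kx α B γ : ℝ) (hB : 0 ≤ B) (hγ : 0 ≤ γ)
    (hθB : ∀ i, |θ i| ≤ B)
    (hKxΘx : |Kx - α * Θx| ≤ γ)
    (hκθ : ∀ i, |κ i - α * θ i| ≤ γ)
    (hop : ‖Matrix.toEuclideanCLM (𝕜 := ℝ) (KX - α • ΘX)‖ ≤ n * γ) :
    |(Kx + θ ⬝ᵥ (ΘX⁻¹ *ᵥ (KX *ᵥ (ΘX⁻¹ *ᵥ θ))) - κ ⬝ᵥ (ΘX⁻¹ *ᵥ θ)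
        - θ ⬝ᵥ (ΘX⁻¹ *ᵥ κ))
      - α * (Θx - θ ⬝ᵥ (ΘX⁻¹ *ᵥ θ))| ≤
      γ + n ^ 2 * γ * B ^ 2 / lammin ^ 2 + 2 * n * γ * B / lammin ∧
    γ + n ^ 2 * γ * B ^ 2 / lammin ^ 2 + 2 * n * γ * B / lammin =
      γ * (1 + n * B / lammin) ^ 2 :=
  sigmaNN_sub_alpha_sigmaNTKGP_bound_general n ΘX KX hΘsym hΘpd lammin hlam hlampos θ κ Θx Kx α B γ
    hB hγ hθB hKxΘx hκθ hop
end

section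
/- Define ρ̃_±^(0) = ±‖x‖·‖x'‖ and, for ℓ ≥ 1, ρ̃_±^(ℓ) = √(u^(ℓ−1))·ρ( ρ̃_±^(ℓ−1) / √(u^(ℓ−1)) ) + σ_b², where u^(ℓ) = (‖x‖² + ℓσ_b²)·(‖x'‖² + ℓσ_b²). Then for every ℓ ≥ 0: ρ̃_−^(ℓ) ≤ K^(ℓ)(x,x') ≤ ρ̃_+^(ℓ). -/
open Real

/-- The dual activation function of the scaled ReLU `φ(t) = √2·max(t,0)`. -/
noncomputable def rho (r : ℝ) : ℝ :=
  (1 / π) * (Real.sqrt (1 - r ^ 2) + (π - Real.arccos r) * r)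

/-- The dual activation function of the derivative of the scaled ReLU. -/
noncomputable def rhoPrime (r : ℝ) : ℝ := (π - Real.arccos r) / π

/-- The depth-`ℓ` NNGP kernel `K^(ℓ)` of a ReLU network with bias variance `σb²`,
defined recursively by `K^(0)(v,w) = ⟪v,w⟫` and
`K^(ℓ)(v,w) = √(K^(ℓ−1)(v,v)·K^(ℓ−1)(w,w))·ρ(K^(ℓ−1)(v,w)/√(K^(ℓ−1)(v,v)·K^(ℓ−1)(w,w))) + σb²`. -/
noncomputable def Kker (σb : ℝ) {d : ℕ} :
    ℕ → EuclideanSpace ℝ (Fin d) → EuclideanSpace ℝ (Fin d) → ℝ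
  | 0, v, w => (inner ℝ v w : ℝ)
  | ℓ + 1, v, w =>
      Real.sqrt (Kker σb ℓ v v * Kker σb ℓ w w) *
        rho (Kker σb ℓ v w / Real.sqrt (Kker σb ℓ v v * Kker σb ℓ w w)) + σb ^ 2

/-- `u^(ℓ) = (‖x‖² + ℓσ_b²)·(‖x'‖² + ℓσ_b²)`, stated for the norms `a = ‖x‖`, `b = ‖x'‖`. -/
noncomputable def uFun (σb a b : ℝ) (ℓ : ℕ) : ℝ :=
  (a ^ 2 + ℓ * σb ^ 2) * (b ^ 2 + ℓ * σb ^ 2)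

/-- `ρ̃^(0) = init` (with `init = ±‖x‖·‖x'‖`) and, for `ℓ ≥ 1`,
`ρ̃^(ℓ) = √(u^(ℓ−1))·ρ(ρ̃^(ℓ−1)/√(u^(ℓ−1))) + σ_b²`. -/
noncomputable def rhoTilde (σb a b init : ℝ) : ℕ → ℝ
  | 0 => init
  | ℓ + 1 =>
      Real.sqrt (uFun σb a b ℓ) *
        rho (rhoTilde σb a b init ℓ / Real.sqrt (uFun σb a b ℓ)) + σb ^ 2

/- Since `ρ(1) = 1`, the diagonal kernels are `K^(ℓ)(x,x) = ‖x‖² + ℓσ_b²`, so `K^(ℓ)(x,x')` obeys the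
recursion defining `ρ̃`, started from `⟪x,x'⟫` instead of `±‖x‖·‖x'‖`. The step map
`t ↦ √u·ρ(t/√u) + σ_b²` is monotone because `ρ` is (its derivative on `(-1,1)` is `rhoPrime ≥ 0`,
it vanishes below `-1` and is the identity above `1`), so the Cauchy–Schwarz bounds
`-‖x‖‖x'‖ ≤ ⟪x,x'⟫ ≤ ‖x‖‖x'‖` propagate to every depth. -/

lemma rho_one : rho 1 = 1 := by
  simp [rho]

lemma rho_of_one_le {r : ℝ} (h : 1 ≤ r) : rho r = r := by
  rw [rho, Real.arccos_eq_zero.mpr h, Real.sqrt_eq_zero'.mpr (by nlinarith)]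
  field_simp
  ring

lemma rho_of_le_neg_one {r : ℝ} (h : r ≤ -1) : rho r = 0 := by
  rw [rho, Real.arccos_eq_pi.mpr h, Real.sqrt_eq_zero'.mpr (by nlinarith)]
  ring

lemma continuous_rho : Continuous rho := by
  unfold rho
  fun_prop

lemma hasDerivAt_rho {r : ℝ} (h₁ : -1 < r) (h₂ : r < 1) : HasDerivAt rho (rhoPrime r) r := by
  have hpos : 0 < 1 - r ^ 2 := by nlinarith
  have hsqrt : HasDerivAt (fun t : ℝ => √(1 - t ^ 2)) (-r / √(1 - r ^ 2)) r := by
    have h := ((hasDerivAt_pow 2 r).const_sub 1).sqrt hpos.ne'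
    refine h.congr_deriv ?_
    norm_num
    field_simp
  have harccos := Real.hasDerivAt_arccos h₁.ne' h₂.ne
  have h := (hsqrt.add (((hasDerivAt_const r π).sub harccos).mul (hasDerivAt_id r))).const_mul
    (1 / π)
  refine h.congr_deriv ?_
  have : √(1 - r ^ 2) ≠ 0 := by positivity
  simp only [rhoPrime, id, Pi.sub_apply]
  field_simp
  ring

lemma rhoPrime_nonneg (r : ℝ) : 0 ≤ rhoPrime r :=
  div_nonneg (sub_nonneg.mpr (Real.arccos_le_pi r)) Real.pi_pos.le

lemma monotoneOn_rho_Icc : MonotoneOn rho (Set.Icc (-1) 1) := by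
  refine monotoneOn_of_deriv_nonneg (convex_Icc _ _) continuous_rho.continuousOn ?_ ?_ <;>
    rw [interior_Icc]
  · exact fun r hr => (hasDerivAt_rho hr.1 hr.2).differentiableAt.differentiableWithinAt
  · exact fun r hr => (hasDerivAt_rho hr.1 hr.2).deriv ▸ rhoPrime_nonneg r

lemma monotone_rho : Monotone rho := by
  have hleft : MonotoneOn rho (Set.Iic (-1)) := fun r hr s hs _ => by
    rw [rho_of_le_neg_one hr, rho_of_le_neg_one hs]
  have hright : MonotoneOn rho (Set.Ici 1) := fun r hr s hs hrs => by
    rwa [rho_of_one_le hr, rho_of_one_le hs]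
  refine MonotoneOn.Iic_union_Ici (a := (1 : ℝ)) ?_ hright
  rw [← Set.Iic_union_Icc_eq_Iic (by norm_num : (-1 : ℝ) ≤ 1)]
  exact hleft.union_right monotoneOn_rho_Icc isGreatest_Iic (isLeast_Icc (by norm_num))

lemma monotone_mul_rho_div {s : ℝ} (hs : 0 ≤ s) : Monotone fun t => s * rho (t / s) :=
  fun _ _ h => mul_le_mul_of_nonneg_left (monotone_rho (div_le_div_of_nonneg_right h hs)) hs

lemma mul_rho_div_self {s : ℝ} (hs : 0 ≤ s) : s * rho (s / s) = s := by
  rcases hs.eq_or_lt with rfl | hs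
  · simp
  · rw [div_self hs.ne', rho_one, mul_one]

lemma Kker_self (σb : ℝ) {d : ℕ} (x : EuclideanSpace ℝ (Fin d)) :
    ∀ ℓ : ℕ, Kker σb ℓ x x = ‖x‖ ^ 2 + ℓ * σb ^ 2
  | 0 => by simp [Kker]
  | ℓ + 1 => by
    have hnonneg : 0 ≤ ‖x‖ ^ 2 + ℓ * σb ^ 2 := by positivity
    rw [Kker, Kker_self σb x ℓ, Real.sqrt_mul_self hnonneg, mul_rho_div_self hnonneg]
    push_cast
    ring

lemma Kker_succ_eq (σb : ℝ) {d : ℕ} (x x' : EuclideanSpace ℝ (Fin d)) (ℓ : ℕ) :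
    Kker σb (ℓ + 1) x x' =
      √(uFun σb ‖x‖ ‖x'‖ ℓ) * rho (Kker σb ℓ x x' / √(uFun σb ‖x‖ ‖x'‖ ℓ)) + σb ^ 2 := by
  rw [Kker, Kker_self, Kker_self, uFun]

section Comparison

variable {σb a b init : ℝ} {f : ℕ → ℝ}
  (hf : ∀ ℓ, f (ℓ + 1) = √(uFun σb a b ℓ) * rho (f ℓ / √(uFun σb a b ℓ)) + σb ^ 2)
include hf

lemma rhoTilde_le_of_le (h₀ : init ≤ f 0) : ∀ ℓ, rhoTilde σb a b init ℓ ≤ f ℓ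
  | 0 => h₀
  | ℓ + 1 => by
    rw [rhoTilde, hf]
    exact add_le_add_left (monotone_mul_rho_div (Real.sqrt_nonneg _) (rhoTilde_le_of_le h₀ ℓ)) _

lemma le_rhoTilde_of_le (h₀ : f 0 ≤ init) : ∀ ℓ, f ℓ ≤ rhoTilde σb a b init ℓ
  | 0 => h₀
  | ℓ + 1 => by
    rw [rhoTilde, hf]
    exact add_le_add_left (monotone_mul_rho_div (Real.sqrt_nonneg _) (le_rhoTilde_of_le h₀ ℓ)) _

end Comparison

theorem Kker_le_rhoTilde_general (σb : ℝ) {d : ℕ}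
    (x x' : EuclideanSpace ℝ (Fin d)) :
    ∀ ℓ : ℕ,
      rhoTilde σb ‖x‖ ‖x'‖ (-(‖x‖ * ‖x'‖)) ℓ ≤ Kker σb ℓ x x' ∧
      Kker σb ℓ x x' ≤ rhoTilde σb ‖x‖ ‖x'‖ (‖x‖ * ‖x'‖) ℓ := by
  intro ℓ
  have hf := Kker_succ_eq σb x x'
  obtain ⟨hlower, hupper⟩ := abs_le.mp (abs_real_inner_le_norm x x')
  exact ⟨rhoTilde_le_of_le (f := (Kker σb · x x')) hf hlower ℓ,
    le_rhoTilde_of_le (f := (Kker σb · x x')) hf hupper ℓ⟩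

/-- Lemma A.10: `ρ̃_−^(ℓ) ≤ K^(ℓ)(x,x') ≤ ρ̃_+^(ℓ)` for every `ℓ ≥ 0`. -/
theorem Kker_le_rhoTilde (σb : ℝ) (hσb : 0 ≤ σb) {d : ℕ}
    (x x' : EuclideanSpace ℝ (Fin d)) (hx : x ≠ 0) (hx' : x' ≠ 0) :
    ∀ ℓ : ℕ,
      rhoTilde σb ‖x‖ ‖x'‖ (-(‖x‖ * ‖x'‖)) ℓ ≤ Kker σb ℓ x x' ∧
      Kker σb ℓ x x' ≤ rhoTilde σb ‖x‖ ‖x'‖ (‖x‖ * ‖x'‖) ℓ :=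
  Kker_le_rhoTilde_general σb x x'
end
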